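/- Let G be a finite connected simple graph of order n ≥ 2 and let p < n be a positive integer. Then ⌈(n+p)/2⌉ ≤ γ(M(G + K̄_p)) ≤ n, where G + K̄_p is the join of G with the edgeless graph on p vertices and γ denotes the domination number. -/

import Mathlib

/-- `S` is a dominating set of the graph `H`. -/
def IsDomSet {V : Type*} (H : SimpleGraph V) (S : Set V) : Prop :=
  ∀ v : V, v ∈ S ∨ ∃ s ∈ S, H.Adj v s

/-- The domination number of a graph `H`. -/
noncomputable def domNum {V : Type*} (H : SimpleGraph V) : ℕ :=
  sInf {k : ℕ | ∃ S : Set V, IsDomSet H S ∧ S.ncard = k}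

/-- The middle graph `M(G)` of a graph `G`: its vertices are the vertices and edges
of `G`; a vertex is adjacent to the edges incident to it, and two edges are adjacent
iff they are distinct and share an endpoint. -/
def middleGraph {V : Type*} (G : SimpleGraph V) : SimpleGraph (V ⊕ G.edgeSet) where
  Adj x y :=
    match x, y with
    | Sum.inl _, Sum.inl _ => False
    | Sum.inl v, Sum.inr e => v ∈ (e : Sym2 V)
    | Sum.inr e, Sum.inl v => v ∈ (e : Sym2 V)
    | Sum.inr e, Sum.inr f => e ≠ f ∧ ∃ v, v ∈ (e : Sym2 V) ∧ v ∈ (f : Sym2 V)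
  symm := by
    constructor
    rintro (v | e) (w | f) h
    · exact h.elim
    · exact h
    · exact h
    · exact ⟨Ne.symm h.1, h.2.imp fun v hv => ⟨hv.2, hv.1⟩⟩
  loopless := by
    constructor
    rintro (v | e) h
    · exact h.elim
    · exact h.1 rfl

/-- The join `G + H` of two graphs. -/
def graphJoin {V W : Type*} (G : SimpleGraph V) (H : SimpleGraph W) :
    SimpleGraph (V ⊕ W) where
  Adj x y :=
    match x, y with
    | Sum.inl a, Sum.inl b => G.Adj a b
    | Sum.inl _, Sum.inr _ => True
    | Sum.inr _, Sum.inl _ => True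
    | Sum.inr a, Sum.inr b => H.Adj a b
  symm := by
    constructor
    rintro (a | a) (b | b) h
    · exact G.adj_symm h
    · trivial
    · trivial
    · exact H.adj_symm h
  loopless := by
    constructor
    rintro (a | a) h
    · exact G.irrefl h
    · exact H.irrefl h

/-! Every vertex of `M(H)` dominates at most two vertices of `H` (itself, or the two ends of an
edge), so a dominating set of `M(H)` has at least `|V(H)| / 2` elements. Conversely, any set `F`
of edges of `H`, together with the vertices that `F` misses, dominates `M(H)`. In `G + K̄_p` with
`p ≤ n`, matching the `p` vertices of `K̄_p` injectively into `V(G)` gives `p` edges missing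
exactly `n - p` vertices, hence a dominating set of size `n`. -/

section Domination

variable {V : Type*} {H : SimpleGraph V}

theorem isDomSet_univ (H : SimpleGraph V) : IsDomSet H Set.univ :=
  fun _ => Or.inl trivial

theorem domNum_le_ncard {S : Set V} (hS : IsDomSet H S) : domNum H ≤ S.ncard :=
  Nat.sInf_le ⟨S, hS, rfl⟩

theorem le_domNum {k : ℕ} (h : ∀ S, IsDomSet H S → k ≤ S.ncard) : k ≤ domNum H :=
  le_csInf ⟨_, Set.univ, isDomSet_univ H, rfl⟩ fun _ ⟨S, hS, hk⟩ => hk ▸ h S hS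

end Domination

namespace middleGraph

variable {W : Type*} (H : SimpleGraph W)

def dominatedVertices (x : W ⊕ H.edgeSet) : Set W :=
  {w | Sum.inl w = x ∨ (middleGraph H).Adj (Sum.inl w) x}

theorem ncard_dominatedVertices_le_two (x : W ⊕ H.edgeSet) :
    (dominatedVertices H x).ncard ≤ 2 := by
  rcases x with v | ⟨e, he⟩
  · have : dominatedVertices H (Sum.inl v) = {v} := by
      ext w; simp [dominatedVertices, middleGraph]
    simp [this]
  · induction e using Sym2.ind with
    | _ a b =>
      have : dominatedVertices H (Sum.inr ⟨s(a, b), he⟩) = {a, b} := by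
        ext w; simp [dominatedVertices, middleGraph]
      rw [this]
      exact (Set.ncard_insert_le _ _).trans (by simp)

theorem card_le_two_mul_ncard_of_isDomSet [Finite W] {S : Set (W ⊕ H.edgeSet)}
    (hS : IsDomSet (middleGraph H) S) : Nat.card W ≤ 2 * S.ncard := by
  set T := S.toFinite.toFinset
  have hcover : (Set.univ : Set W) ⊆ ⋃ x ∈ T, dominatedVertices H x := by
    intro w _
    simp only [Set.mem_iUnion, Set.Finite.mem_toFinset, T]
    rcases hS (Sum.inl w) with h | ⟨x, hx, hadj⟩
    · exact ⟨_, h, Or.inl rfl⟩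
    · exact ⟨x, hx, Or.inr hadj⟩
  calc Nat.card W = (Set.univ : Set W).ncard := (Set.ncard_univ W).symm
    _ ≤ (⋃ x ∈ T, dominatedVertices H x).ncard := Set.ncard_le_ncard hcover
    _ ≤ ∑ x ∈ T, (dominatedVertices H x).ncard := T.set_ncard_biUnion_le _
    _ ≤ T.card • 2 := T.sum_le_card_nsmul _ _ fun x _ => ncard_dominatedVertices_le_two H x
    _ = 2 * S.ncard := by rw [smul_eq_mul, mul_comm, Set.ncard_eq_toFinset_card]

theorem half_card_le_domNum [Finite W] : (Nat.card W + 1) / 2 ≤ domNum (middleGraph H) :=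
  le_domNum fun _ hS => by have := card_le_two_mul_ncard_of_isDomSet H hS; omega

def uncovered (F : Set H.edgeSet) : Set W :=
  {v | ∀ e ∈ F, v ∉ (e : Sym2 W)}

theorem isDomSet_edges_union_uncovered (F : Set H.edgeSet) :
    IsDomSet (middleGraph H) (Sum.inr '' F ∪ Sum.inl '' uncovered H F) := by
  have covered {v : W} (hv : v ∉ uncovered H F) : ∃ f ∈ F, v ∈ (f : Sym2 W) := by
    simpa [uncovered] using hv
  rintro (v | e)
  · by_cases hv : v ∈ uncovered H F
    · exact Or.inl (Or.inr ⟨v, hv, rfl⟩)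
    · obtain ⟨f, hf, hvf⟩ := covered hv
      exact Or.inr ⟨Sum.inr f, Or.inl ⟨f, hf, rfl⟩, hvf⟩
  · by_cases he : e ∈ F
    · exact Or.inl (Or.inl ⟨e, he, rfl⟩)
    obtain ⟨v, hv⟩ : ∃ v, v ∈ (e : Sym2 W) :=
      (e : Sym2 W).ind fun a _ => ⟨a, Sym2.mem_mk_left _ _⟩
    by_cases hvu : v ∈ uncovered H F
    · exact Or.inr ⟨Sum.inl v, Or.inr ⟨v, hvu, rfl⟩, hv⟩
    · obtain ⟨f, hf, hvf⟩ := covered hvu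
      exact Or.inr ⟨Sum.inr f, Or.inl ⟨f, hf, rfl⟩, fun h => he (h ▸ hf), v, hv, hvf⟩

theorem domNum_le_ncard_add_ncard_uncovered [Finite W] (F : Set H.edgeSet) :
    domNum (middleGraph H) ≤ F.ncard + (uncovered H F).ncard :=
  (domNum_le_ncard (isDomSet_edges_union_uncovered H F)).trans <|
    (Set.ncard_union_le _ _).trans (add_le_add Set.ncard_image_le Set.ncard_image_le)

end middleGraph

namespace graphJoin

variable {V U : Type*} (G : SimpleGraph V) (K : SimpleGraph U)

def matchingEdge (ι : U ↪ V) (u : U) : (graphJoin G K).edgeSet :=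
  ⟨s(Sum.inl (ι u), Sum.inr u), trivial⟩

theorem matchingEdge_injective (ι : U ↪ V) : Function.Injective (matchingEdge G K ι) := by
  intro u u' h
  have h' : s(Sum.inl (ι u), Sum.inr u) = (s(Sum.inl (ι u'), Sum.inr u') : Sym2 (V ⊕ U)) :=
    congrArg Subtype.val h
  simpa [Sym2.eq_iff] using h'

theorem uncovered_range_matchingEdge_subset (ι : U ↪ V) :
    middleGraph.uncovered _ (Set.range (matchingEdge G K ι)) ⊆ Sum.inl '' (Set.range ι)ᶜ := by
  rintro (v | u) hv
  · refine ⟨v, ?_, rfl⟩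
    rintro ⟨u, rfl⟩
    exact hv _ ⟨u, rfl⟩ (Sym2.mem_mk_left _ _)
  · exact (hv _ ⟨u, rfl⟩ (Sym2.mem_mk_right _ _)).elim

theorem domNum_middleGraph_le [Finite V] (ι : U ↪ V) :
    domNum (middleGraph (graphJoin G K)) ≤ Nat.card V := by
  have : Finite U := Finite.of_injective ι ι.injective
  have hUV : Nat.card U ≤ Nat.card V := Nat.card_le_card_of_injective ι ι.injective
  have hrange : (Set.range (matchingEdge G K ι)).ncard = Nat.card U :=
    Set.ncard_range_of_injective (matchingEdge_injective G K ι)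
  have huncovered : (middleGraph.uncovered _ (Set.range (matchingEdge G K ι))).ncard ≤
      Nat.card V - Nat.card U :=
    calc _ ≤ (Sum.inl '' (Set.range ι)ᶜ : Set (V ⊕ U)).ncard :=
          Set.ncard_le_ncard (uncovered_range_matchingEdge_subset G K ι)
      _ ≤ ((Set.range ι)ᶜ).ncard := Set.ncard_image_le
      _ = Nat.card V - Nat.card U := by
          rw [Set.ncard_compl, Set.ncard_range_of_injective ι.injective]
  have := middleGraph.domNum_le_ncard_add_ncard_uncovered _ (Set.range (matchingEdge G K ι))
  omega

end graphJoin

theorem domNum_middle_join_small_bounds_general {V : Type*} [Fintype V] (G : SimpleGraph V) (n p : ℕ)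
    (hord : Fintype.card V = n) (hp : p < n) :
    (n + p + 1) / 2 ≤ domNum (middleGraph (graphJoin G (⊥ : SimpleGraph (Fin p)))) ∧
    domNum (middleGraph (graphJoin G (⊥ : SimpleGraph (Fin p)))) ≤ n := by
  obtain ⟨ι⟩ : Nonempty (Fin p ↪ V) :=
    Function.Embedding.nonempty_of_card_le (by rw [Fintype.card_fin, hord]; exact hp.le)
  constructor
  · simpa [hord] using middleGraph.half_card_le_domNum (graphJoin G (⊥ : SimpleGraph (Fin p)))
  · simpa [hord] using graphJoin.domNum_middleGraph_le G ⊥ ι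

/-- For a connected graph `G` of order `n ≥ 2` and `0 < p < n`,
`⌈(n+p)/2⌉ ≤ γ(M(G + K̄_p)) ≤ n`. -/
theorem domNum_middle_join_small_bounds {V : Type*} [Fintype V] (G : SimpleGraph V) (n p : ℕ)
    (hord : Fintype.card V = n) (hn : 2 ≤ n) (hconn : G.Connected)
    (hp0 : 0 < p) (hp : p < n) :
    (n + p + 1) / 2 ≤ domNum (middleGraph (graphJoin G (⊥ : SimpleGraph (Fin p)))) ∧
    domNum (middleGraph (graphJoin G (⊥ : SimpleGraph (Fin p)))) ≤ n :=
  domNum_middle_join_small_bounds_general G n p hord hp
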